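/- For every integer k ≥ 2 and every even integer λ ≥ 2, there exists a finite pseudometric space (M,d) containing distinct points a, b, x_1, …, x_{k−1}, pairwise at distance 1, and a set N of k·λ agent points partitioned into groups g_1, …, g_k each of size λ, such that: (i) for every j ∈ {1,…,k−1}, every agent i ∈ g_j satisfies d(i,a) = 0 and d(i,z) = 1 for every alternative z ≠ a (so x_j is among the farthest alternatives from i); (ii) in group g_k, λ/2 agents are at distance 1/2 from every alternative (so a is among their farthest alternatives) and the remaining λ/2 agents satisfy d(i,a) = 0 and d(i,z) = 1 for z ≠ a (so b is among their farthest alternatives); and (iii) Σ_{i∈N} d(i, x_j) = (4k − 1) · Σ_{i∈N} d(i, a) for every j ∈ {1,…,k−1}. -/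
import Mathlib


/-- Distance on classes: `some u` is alternative `u`, `none` is the "center". -/
noncomputable def DD (k : ℕ) : Option (Fin (k + 1)) → Option (Fin (k + 1)) → ℝ
  | none, none => 0
  | none, some _ => 1 / 2
  | some _, none => 1 / 2
  | some u, some v => if u = v then 0 else 1

/-- Class of each point. -/
def cc (k lam : ℕ) : (Fin (k + 1) ⊕ Fin k × Fin lam) → Option (Fin (k + 1))
  | .inl z => some z
  | .inr (j, i) => if (j : ℕ) = k - 1 ∧ (i : ℕ) < lam / 2 then none else some 0

lemma DD_self (k : ℕ) (x : Option (Fin (k+1))) : DD k x x = 0 := by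
  cases x <;> simp [DD]

lemma DD_nonneg (k : ℕ) (x y : Option (Fin (k+1))) : 0 ≤ DD k x y := by
  cases x <;> cases y <;> simp [DD] <;> split_ifs <;> norm_num

lemma DD_symm (k : ℕ) (x y : Option (Fin (k+1))) : DD k x y = DD k y x := by
  cases x <;> cases y <;> simp [DD, eq_comm]

lemma DD_tri (k : ℕ) (x y z : Option (Fin (k+1))) : DD k x z ≤ DD k x y + DD k y z := by
  cases x <;> cases y <;> cases z <;> simp only [DD] <;> (try split_ifs) <;> norm_num <;> simp_all


lemma agent_sum (k lam : ℕ) (hk : 2 ≤ k) (z : Fin (k + 1)) :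
    ∑ j : Fin k, ∑ i : Fin lam, DD k (cc k lam (.inr (j, i))) (some z) =
      (((lam / 2 : ℕ) : ℝ) * (1 / 2) +
        ((lam - lam / 2 : ℕ) : ℝ) * (if (0 : Fin (k + 1)) = z then 0 else 1)) +
      ((k - 1 : ℕ) : ℝ) * ((lam : ℝ) * (if (0 : Fin (k + 1)) = z then 0 else 1)) := by
  classical
  set e0 : ℝ := if (0 : Fin (k + 1)) = z then 0 else 1 with he0
  have hterm : ∀ (j : Fin k) (i : Fin lam),
      DD k (cc k lam (.inr (j, i))) (some z) =
        if (j : ℕ) = k - 1 ∧ (i : ℕ) < lam / 2 then 1 / 2 else e0 := by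
    intro j i
    by_cases h : (j : ℕ) = k - 1 ∧ (i : ℕ) < lam / 2 <;> simp [cc, DD, h, he0]
  have hinner : ∀ A B : ℝ, ∑ i : Fin lam, (if (i : ℕ) < lam / 2 then A else B) =
      ((lam / 2 : ℕ) : ℝ) * A + ((lam - lam / 2 : ℕ) : ℝ) * B := by
    intro A B
    rw [Fin.sum_univ_eq_sum_range (fun i => if i < lam / 2 then A else B)]
    rw [Finset.range_eq_Ico,
      ← Finset.sum_Ico_consecutive _ (Nat.zero_le (lam / 2)) (Nat.div_le_self lam 2)]
    have h1 : ∑ i ∈ Finset.Ico 0 (lam / 2), (if i < lam / 2 then A else B) =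
        ((lam / 2 : ℕ) : ℝ) * A := by
      rw [Finset.sum_congr rfl fun i hi =>
        if_pos ((Finset.mem_Ico.mp hi).2)]
      simp [Finset.sum_const, Nat.card_Ico, nsmul_eq_mul]
    have h2 : ∑ i ∈ Finset.Ico (lam / 2) lam, (if i < lam / 2 then A else B) =
        ((lam - lam / 2 : ℕ) : ℝ) * B := by
      rw [Finset.sum_congr rfl fun i hi =>
        if_neg (by have := (Finset.mem_Ico.mp hi).1; omega)]
      simp [Finset.sum_const, Nat.card_Ico, nsmul_eq_mul]
    rw [h1, h2]
  have houter : ∀ P Q : ℝ, ∑ j : Fin k, (if (j : ℕ) = k - 1 then P else Q) =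
      P + ((k - 1 : ℕ) : ℝ) * Q := by
    intro P Q
    rw [Fin.sum_univ_eq_sum_range (fun j => if j = k - 1 then P else Q)]
    obtain ⟨m, rfl⟩ : ∃ m, k = m + 1 := ⟨k - 1, by omega⟩
    rw [Finset.sum_range_succ]
    simp only [Nat.add_sub_cancel]
    rw [Finset.sum_congr rfl fun j hj =>
      if_neg (by have := Finset.mem_range.mp hj; omega)]
    simp [Finset.sum_const, nsmul_eq_mul]
    ring
  calc ∑ j : Fin k, ∑ i : Fin lam, DD k (cc k lam (.inr (j, i))) (some z)
      = ∑ j : Fin k, (if (j : ℕ) = k - 1 then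
          ((lam / 2 : ℕ) : ℝ) * (1 / 2) + ((lam - lam / 2 : ℕ) : ℝ) * e0
        else (lam : ℝ) * e0) := by
        refine Finset.sum_congr rfl fun j _ => ?_
        by_cases hj : (j : ℕ) = k - 1
        · rw [if_pos hj,
            show (∑ i : Fin lam, DD k (cc k lam (.inr (j, i))) (some z))
              = ∑ i : Fin lam, (if (i : ℕ) < lam / 2 then (1 / 2 : ℝ) else e0) from
            Finset.sum_congr rfl fun i _ => by rw [hterm]; simp [hj]]
          exact hinner _ _
        · rw [if_neg hj,
            show (∑ i : Fin lam, DD k (cc k lam (.inr (j, i))) (some z))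
              = ∑ i : Fin lam, e0 from
            Finset.sum_congr rfl fun i _ => by rw [hterm]; simp [hj]]
          simp only [Finset.sum_const, Finset.card_univ, Fintype.card_fin,
            nsmul_eq_mul, he0]
    _ = _ := houter _ _


/-- Lower-bound construction for ordinal distributed mechanisms:
`k+1` alternatives `a, b, x_1, …, x_{k−1}` pairwise at distance 1 and `k` groups of `λ`
agents each (with `λ` even), such that the agents of groups `g_1, …, g_{k−1}` are at
distance 0 from `a` and 1 from every other alternative, half of group `g_k` is at distance
`1/2` from every alternative and the other half at distance 0 from `a` and 1 from the rest,
and `SW(x_j) = (4k − 1)·SW(a)` for every `j`.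
Points are elements of the finite carrier `Fin (k+1) ⊕ (Fin k × Fin lam)`:
`Sum.inl 0 = a`, `Sum.inl 1 = b`, `Sum.inl (l+2) = x_{l+1}`, and `Sum.inr (j, i)` is agent
`i` of group `g_{j+1}`; `d` is a pseudometric on this carrier. -/
theorem ordinal_lower_bound_construction
    (k lam : ℕ) (hk : 2 ≤ k) (hlam : 2 ≤ lam) (heven : Even lam) :
    ∃ d : (Fin (k + 1) ⊕ Fin k × Fin lam) → (Fin (k + 1) ⊕ Fin k × Fin lam) → ℝ,
      (∀ p, d p p = 0) ∧
      (∀ p q, 0 ≤ d p q) ∧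
      (∀ p q, d p q = d q p) ∧
      (∀ p q s, d p s ≤ d p q + d q s) ∧
      -- the k+1 alternatives are pairwise at distance 1
      (∀ i j : Fin (k + 1), i ≠ j → d (Sum.inl i) (Sum.inl j) = 1) ∧
      -- (i) the agents of groups g_1, …, g_{k−1}
      (∀ j : Fin k, (j : ℕ) < k - 1 → ∀ i : Fin lam,
        d (Sum.inr (j, i)) (Sum.inl 0) = 0 ∧
        ∀ z : Fin (k + 1), z ≠ 0 → d (Sum.inr (j, i)) (Sum.inl z) = 1) ∧
      -- (ii) the last group g_k
      (∀ i : Fin lam, (i : ℕ) < lam / 2 →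
        ∀ z : Fin (k + 1), d (Sum.inr (⟨k - 1, by omega⟩, i)) (Sum.inl z) = 1 / 2) ∧
      (∀ i : Fin lam, lam / 2 ≤ (i : ℕ) →
        d (Sum.inr (⟨k - 1, by omega⟩, i)) (Sum.inl 0) = 0 ∧
        ∀ z : Fin (k + 1), z ≠ 0 →
          d (Sum.inr (⟨k - 1, by omega⟩, i)) (Sum.inl z) = 1) ∧
      -- (iii) SW(x_j) = (4k − 1) · SW(a) for every j ∈ {1, …, k−1}
      (∀ l : Fin (k - 1),
        ∑ j : Fin k, ∑ i : Fin lam,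
            d (Sum.inr (j, i)) (Sum.inl ⟨(l : ℕ) + 2, by have := l.isLt; omega⟩) =
          (4 * (k : ℝ) - 1) *
            ∑ j : Fin k, ∑ i : Fin lam, d (Sum.inr (j, i)) (Sum.inl 0)) := by
  classical
  refine ⟨fun p q => DD k (cc k lam p) (cc k lam q), fun p => DD_self k _,
    fun p q => DD_nonneg k _ _, fun p q => DD_symm k _ _,
    fun p q s => DD_tri k _ _ _, ?_, ?_, ?_, ?_, ?_⟩
  · intro i j hij
    simp [cc, DD, hij]
  · intro j hj i
    have hj' : (j : ℕ) ≠ k - 1 := by omega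
    constructor
    · simp [cc, DD, hj']
    · intro z hz
      simp [cc, DD, hj', Ne.symm hz]
  · intro i hi z
    simp [cc, DD, hi]
  · intro i hi
    have hi' : ¬ ((i : ℕ) < lam / 2) := by omega
    constructor
    · simp [cc, DD, hi']
    · intro z hz
      simp [cc, DD, hi', Ne.symm hz]
  · intro l
    have hz : (0 : Fin (k + 1)) ≠ ⟨(l : ℕ) + 2, by have := l.isLt; omega⟩ := by
      intro h
      have := congrArg Fin.val h
      simp at this
    show (∑ j : Fin k, ∑ i : Fin lam, DD k (cc k lam (Sum.inr (j, i)))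
            (some ⟨(l : ℕ) + 2, by have := l.isLt; omega⟩)) =
        (4 * (k : ℝ) - 1) *
          ∑ j : Fin k, ∑ i : Fin lam, DD k (cc k lam (Sum.inr (j, i))) (some 0)
    rw [agent_sum k lam hk, agent_sum k lam hk, if_neg hz, if_pos rfl]
    obtain ⟨t, rfl⟩ := heven
    have h2t : (t + t) / 2 = t := by omega
    have h3 : (t + t) - t = t := by omega
    have hkc : ((k - 1 : ℕ) : ℝ) = (k : ℝ) - 1 := by
      have h1 : 1 ≤ k := by omega
      push_cast [h1]
      ring
    rw [h2t, h3, hkc]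

    push_cast
    ring
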